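/- arXiv:math/0607653 — 4 statements merged into one kernel-verified Lean document; each statement's English description precedes it below -/
import Mathlib

section
/- Let λ be a real number with λ > 0 and λ ≠ 1, and let m ≥ 1 and n ≥ 1 be integers. Then m·B_n(λ) − m^n·((1 − λ^m)/(1 − λ))·B_n(λ^m) = ∑_{j=0}^{n−1} C(n,j)·B_j(λ^m)·m^j·∑_{k=1}^{m−1} λ^k·k^{n−j}. -/
/-- The λ-Bernoulli numbers `B_n(λ)`, defined by `B_0(λ) = Log λ / (λ - 1)` and, for `n ≥ 1`,
by the recurrence `λ·∑_{k=0}^{n} C(n,k)·B_k(λ) - B_n(λ) = (1 if n = 1, 0 if n ≥ 2)`,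
encoding the generating function `(Log λ + t)/(λ e^t - 1) = ∑ B_n(λ) t^n/n!`. -/
noncomputable def lambdaBernoulli (lam : ℂ) : ℕ → ℂ
  | 0 => Complex.log lam / (lam - 1)
  | n + 1 =>
      ((if n = 0 then (1 : ℂ) else 0) -
        lam * ∑ k : Fin (n + 1), ((n + 1).choose (k : ℕ) : ℂ) * lambdaBernoulli lam k) / (lam - 1)


/-!
With `P_n(x) = ∑_j C(n,j) B_j(μ^m) m^j x^(n-j)` and `S_n = ∑_{a<m} μ^a P_n(a)`, the
multiplication formula `m B_n(μ) = S_n` holds because `S` satisfies the recurrence of `m B_n(μ)`: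
the `P_n` form an Appell sequence, so `μ ∑_k C(n,k) S_k = ∑_{a<m} μ^(a+1) P_n(a+1)`, which
telescopes to `S_n + μ^m P_n(m) - P_n(0)`, and `μ^m P_n(m) - P_n(0)` is `m^n` times the
recurrence for `B_n(μ^m)`. The initial values agree because `Log(λ^m) = m Log λ` for `λ > 0`.
The theorem is this formula for `μ = λ` with the `j = n` term (a geometric sum) moved to the
left and the vanishing `a = 0` term dropped.
-/

open Finset

section Appell

variable {R : Type*} [CommSemiring R]

/-- The Appell polynomial `∑ j, C(n,j) b_j X^(n-j)` of the sequence `b`, evaluated at `x`;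
for `b = lambdaBernoulli ν` it is the `λ`-Bernoulli polynomial `B_n(ν; x)`. -/
def appellEval (b : ℕ → R) (n : ℕ) (x : R) : R :=
  ∑ j ∈ range (n + 1), (n.choose j : R) * b j * x ^ (n - j)

theorem appellEval_eq_sum_range_add (b : ℕ → R) (n : ℕ) (x : R) :
    appellEval b n x = ∑ j ∈ range n, (n.choose j : R) * b j * x ^ (n - j) + b n := by
  simp [appellEval, sum_range_succ]

theorem appellEval_zero_right (b : ℕ → R) (n : ℕ) : appellEval b n 0 = b n := by
  rw [appellEval_eq_sum_range_add, sum_eq_zero, zero_add]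
  intro j hj
  rw [zero_pow (Nat.sub_ne_zero_of_lt (mem_range.mp hj)), mul_zero]

theorem appellEval_zero_left (b : ℕ → R) (x : R) : appellEval b 0 x = b 0 := by
  simp [appellEval]

theorem appellEval_one_right (b : ℕ → R) (n : ℕ) :
    appellEval b n 1 = ∑ k ∈ range (n + 1), (n.choose k : R) * b k := by
  simp [appellEval]

theorem appellEval_mul_pow (b : ℕ → R) (c x : R) (n : ℕ) :
    appellEval (fun j ↦ b j * c ^ j) n (c * x) = c ^ n * appellEval b n x := by
  rw [appellEval, appellEval, mul_sum]
  refine sum_congr rfl fun j hj ↦ ?_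
  rw [mul_pow, ← pow_sub_mul_pow c (Nat.le_of_lt_succ (mem_range.mp hj))]
  ring

theorem sum_Ico_choose_mul_choose_mul_pow {n j : ℕ} (hj : j ≤ n) (x : R) :
    ∑ k ∈ Ico j (n + 1), (n.choose k : R) * k.choose j * x ^ (k - j) =
      n.choose j * (x + 1) ^ (n - j) := by
  rw [sum_Ico_eq_sum_range, Nat.sub_add_comm hj, add_pow, mul_sum]
  refine sum_congr rfl fun i _ ↦ ?_
  have hchoose : n.choose (j + i) * (j + i).choose j = n.choose j * (n - j).choose i := by
    simpa using Nat.choose_mul (n := n) (Nat.le_add_right j i)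
  rw [Nat.add_sub_cancel_left, ← Nat.cast_mul, hchoose]
  push_cast
  ring

theorem sum_range_choose_mul_appellEval (b : ℕ → R) (n : ℕ) (x : R) :
    ∑ k ∈ range (n + 1), (n.choose k : R) * appellEval b k x = appellEval b n (x + 1) := by
  have hswap := sum_Ico_Ico_comm 0 (n + 1)
    fun j k ↦ (n.choose k : R) * (k.choose j * b j * x ^ (k - j))
  simp only [← range_eq_Ico] at hswap
  simp only [appellEval, mul_sum, ← hswap]
  refine sum_congr rfl fun j hj ↦ ?_
  rw [mul_right_comm, ← sum_Ico_choose_mul_choose_mul_pow (Nat.le_of_lt_succ (mem_range.mp hj)),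
    sum_mul]
  refine sum_congr rfl fun k _ ↦ ?_
  ring

theorem sum_mul_appellEval {ι : Type*} (s : Finset ι) (w x : ι → R) (b : ℕ → R) (n : ℕ) :
    ∑ i ∈ s, w i * appellEval b n (x i) =
      ∑ j ∈ range n, (n.choose j : R) * b j * ∑ i ∈ s, w i * x i ^ (n - j) +
        (∑ i ∈ s, w i) * b n := by
  simp only [appellEval_eq_sum_range_add, mul_add, sum_add_distrib, mul_sum, sum_mul]
  rw [sum_comm]
  congr 1
  exact sum_congr rfl fun j _ ↦ sum_congr rfl fun i _ ↦ by ring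

end Appell

theorem Finset.sum_Icc_one_sub_one_eq_sum_range {M : Type*} [AddCommMonoid M] {f : ℕ → M}
    (h0 : f 0 = 0) (m : ℕ) : ∑ k ∈ Icc 1 (m - 1), f k = ∑ k ∈ range m, f k := by
  refine sum_subset (fun k hk ↦ ?_) fun k hk hk' ↦ ?_
  · simp only [mem_Icc, mem_range] at hk ⊢
    omega
  · obtain rfl : k = 0 := by simp only [mem_Icc, mem_range] at hk hk'; omega
    exact h0

theorem Complex.log_ofReal_pow {x : ℝ} (hx : 0 ≤ x) (m : ℕ) :
    Complex.log ((x : ℂ) ^ m) = m * Complex.log x := by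
  rw [← ofReal_pow, ← ofReal_log (pow_nonneg hx m), Real.log_pow, ofReal_mul, ofReal_log hx,
    ofReal_natCast]

section LambdaBernoulli

variable {μ : ℂ}

theorem lambdaBernoulli_recurrence (hμ : μ ≠ 1) (n : ℕ) :
    μ * ∑ k ∈ range (n + 2), ((n + 1).choose k : ℂ) * lambdaBernoulli μ k
      - lambdaBernoulli μ (n + 1) = if n = 0 then 1 else 0 := by
  have hB : lambdaBernoulli μ (n + 1) * (μ - 1) = (if n = 0 then 1 else 0) -
      μ * ∑ k ∈ range (n + 1), ((n + 1).choose k : ℂ) * lambdaBernoulli μ k := by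
    rw [lambdaBernoulli, Fin.sum_univ_eq_sum_range (fun k ↦ ((n + 1).choose k : ℂ) * _),
      div_mul_cancel₀ _ (sub_ne_zero.mpr hμ)]
  rw [sum_range_succ, Nat.choose_self, Nat.cast_one, one_mul]
  linear_combination hB

theorem eq_mul_lambdaBernoulli_of_recurrence (hμ : μ ≠ 1) (t : ℂ) {c : ℕ → ℂ}
    (h0 : c 0 = t * lambdaBernoulli μ 0)
    (hrec : ∀ n, μ * ∑ k ∈ range (n + 2), ((n + 1).choose k : ℂ) * c k - c (n + 1) =
      t * if n = 0 then 1 else 0) (n : ℕ) :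
    c n = t * lambdaBernoulli μ n := by
  induction n using Nat.strong_induction_on with
  | _ n ih =>
    rcases n with _ | n
    · exact h0
    have hc := hrec n
    have hB := lambdaBernoulli_recurrence hμ n
    have hlower : ∑ k ∈ range (n + 1), ((n + 1).choose k : ℂ) * c k =
        t * ∑ k ∈ range (n + 1), ((n + 1).choose k : ℂ) * lambdaBernoulli μ k := by
      rw [mul_sum]
      exact sum_congr rfl fun k hk ↦ by rw [ih k (mem_range.mp hk)]; ring
    rw [sum_range_succ, hlower, Nat.choose_self, Nat.cast_one, one_mul] at hc
    rw [sum_range_succ, Nat.choose_self, Nat.cast_one, one_mul] at hB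
    have hprod : (μ - 1) * (c (n + 1) - t * lambdaBernoulli μ (n + 1)) = 0 := by
      linear_combination hc - t * hB
    exact sub_eq_zero.mp ((mul_eq_zero.mp hprod).resolve_left (sub_ne_zero.mpr hμ))

/-- The multiplication formula `m B_n(μ) = m^n ∑_{a<m} μ^a B_n(μ^m; a/m)`, with the division
by `m` absorbed into the weights `m^j`. -/
theorem mul_lambdaBernoulli_eq_sum_appellEval {m : ℕ} (hμ : μ ≠ 1) (hμm : μ ^ m ≠ 1)
    (hlog : Complex.log (μ ^ m) = m * Complex.log μ) (n : ℕ) :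
    m * lambdaBernoulli μ n =
      ∑ a ∈ range m, μ ^ a * appellEval (fun j ↦ lambdaBernoulli (μ ^ m) j * m ^ j) n a := by
  set b : ℕ → ℂ := fun j ↦ lambdaBernoulli (μ ^ m) j * m ^ j
  refine (eq_mul_lambdaBernoulli_of_recurrence hμ m (c := fun n ↦
    ∑ a ∈ range m, μ ^ a * appellEval b n a) ?_ ?_ n).symm
  · simp only [appellEval_zero_left, ← sum_mul, geom_sum_eq hμ, b, pow_zero, mul_one,
      lambdaBernoulli, hlog]
    field_simp
  intro n
  set P : ℕ → ℂ := fun a ↦ μ ^ a * appellEval b (n + 1) a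
  have hshift : μ * ∑ k ∈ range (n + 2), ((n + 1).choose k : ℂ) *
      ∑ a ∈ range m, μ ^ a * appellEval b k a = ∑ a ∈ range m, P (a + 1) := by
    simp only [P, mul_sum]
    rw [sum_comm]
    refine sum_congr rfl fun a _ ↦ ?_
    rw [Nat.cast_succ, ← sum_range_choose_mul_appellEval, mul_sum, pow_succ]
    exact sum_congr rfl fun k _ ↦ by ring
  have htelescope : ∑ a ∈ range m, P (a + 1) = ∑ a ∈ range m, P a + P m - P 0 := by
    have := sum_range_sub P m
    rw [sum_sub_distrib] at this
    linear_combination this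
  have hends : P m - P 0 = m * if n = 0 then 1 else 0 := by
    have hrec := lambdaBernoulli_recurrence hμm n
    rw [← appellEval_one_right] at hrec
    have hscale : appellEval b (n + 1) m =
        m ^ (n + 1) * appellEval (lambdaBernoulli (μ ^ m)) (n + 1) 1 := by
      simpa using appellEval_mul_pow (lambdaBernoulli (μ ^ m)) m 1 (n + 1)
    simp only [P, Nat.cast_zero, pow_zero, one_mul, appellEval_zero_right, hscale, b]
    rcases n with _ | n
    · linear_combination (m : ℂ) * hrec
    · rw [if_neg n.succ_ne_zero] at hrec ⊢
      linear_combination (m : ℂ) ^ (n + 2) * hrec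
  linear_combination hshift + htelescope + hends

end LambdaBernoulli

theorem lambdaBernoulli_multiplication_remainder_general (lam : ℝ) (hpos : 0 < lam) (h1 : lam ≠ 1)
    (m : ℕ) (hm : 1 ≤ m) (n : ℕ) :
    (m : ℂ) * lambdaBernoulli (lam : ℂ) n -
        (m : ℂ) ^ n * ((1 - (lam : ℂ) ^ m) / (1 - (lam : ℂ))) * lambdaBernoulli ((lam : ℂ) ^ m) n =
      ∑ j ∈ Finset.range n,
        (n.choose j : ℂ) * lambdaBernoulli ((lam : ℂ) ^ m) j * (m : ℂ) ^ j *
          ∑ k ∈ Finset.Icc 1 (m - 1), (lam : ℂ) ^ k * (k : ℂ) ^ (n - j) := by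
  have hμ : (lam : ℂ) ≠ 1 := mod_cast h1
  have hμm : (lam : ℂ) ^ m ≠ 1 :=
    mod_cast (pow_eq_one_iff_of_nonneg hpos.le (by omega)).not.mpr h1
  have hgeom : (1 - (lam : ℂ) ^ m) / (1 - lam) = ∑ a ∈ range m, (lam : ℂ) ^ a := by
    rw [geom_sum_eq hμ, ← neg_sub ((lam : ℂ) ^ m), ← neg_sub (lam : ℂ), neg_div_neg_eq]
  have hdrop (j : ℕ) (hj : j ∈ range n) :
      (n.choose j : ℂ) * (lambdaBernoulli ((lam : ℂ) ^ m) j * m ^ j) *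
          ∑ a ∈ range m, (lam : ℂ) ^ a * (a : ℂ) ^ (n - j) =
        (n.choose j : ℂ) * lambdaBernoulli ((lam : ℂ) ^ m) j * m ^ j *
          ∑ k ∈ Icc 1 (m - 1), (lam : ℂ) ^ k * (k : ℂ) ^ (n - j) := by
    rw [sum_Icc_one_sub_one_eq_sum_range (by simp [Nat.sub_ne_zero_of_lt (mem_range.mp hj)]),
      mul_assoc _ (lambdaBernoulli _ j)]
  rw [mul_lambdaBernoulli_eq_sum_appellEval hμ hμm (Complex.log_ofReal_pow hpos.le m),
    sum_mul_appellEval, hgeom, sum_congr rfl hdrop]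
  ring

/-- for real `λ > 0`, `λ ≠ 1` and integers `m ≥ 1`, `n ≥ 1`,
`m·B_n(λ) - m^n·((1 - λ^m)/(1 - λ))·B_n(λ^m)
  = ∑_{j=0}^{n-1} C(n,j)·B_j(λ^m)·m^j·∑_{k=1}^{m-1} λ^k·k^{n-j}`. -/
theorem lambdaBernoulli_multiplication_remainder (lam : ℝ) (hpos : 0 < lam) (h1 : lam ≠ 1)
    (m : ℕ) (hm : 1 ≤ m) (n : ℕ) (hn : 1 ≤ n) :
    (m : ℂ) * lambdaBernoulli (lam : ℂ) n -
        (m : ℂ) ^ n * ((1 - (lam : ℂ) ^ m) / (1 - (lam : ℂ))) * lambdaBernoulli ((lam : ℂ) ^ m) n =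
      ∑ j ∈ Finset.range n,
        (n.choose j : ℂ) * lambdaBernoulli ((lam : ℂ) ^ m) j * (m : ℂ) ^ j *
          ∑ k ∈ Finset.Icc 1 (m - 1), (lam : ℂ) ^ k * (k : ℂ) ^ (n - j) :=
  lambdaBernoulli_multiplication_remainder_general lam hpos h1 m hm n
end

section
/- Let d ≥ 2 be an integer, χ a Dirichlet character modulo d, λ a real number with 0 < λ < 1, and k ≥ 1 an integer. Then L_λ(1 − k, χ) = −B_{k,χ}(λ)/k, i.e. the Dirichlet-type λ-L-function interpolates the generalized λ-Bernoulli numbers at non-positive integers. -/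
/-!
Write `T_n = ∑_{m ≥ 1} χ(m) λ^m m^n`; then `L_λ(1 - k, χ) = T_{k-1} + (log λ / k) T_k`, so it
suffices that `B_{n,χ}(λ) = -(log λ · T_n + n · T_{n-1})`. Shifting `m ↦ m + d` in `T_n`, using
the periodicity of `χ` and expanding `(m + d)^n` binomially gives
`λ^d ∑_k C(n,k) d^{n-k} T_k = T_n - ∑_{j<d} χ(j) λ^j j^n`, and the analogous identity for `n T_{n-1}`
follows from it (multiply the exponential generating functions by `t`). Hence the right-hand side satisfies
the recurrence defining `B_{n,χ}(λ)`, whose solution is unique because `λ^d ≠ 1`.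
-/

/-- The generalized λ-Bernoulli numbers `B_{n,χ}(λ)` attached to a Dirichlet character `χ`
modulo `d`, defined by the recurrence
`λ^d·∑_{k=0}^{n} C(n,k)·d^{n-k}·B_{k,χ}(λ) - B_{n,χ}(λ)
  = (log λ)·∑_{j=0}^{d-1} χ(j)·λ^j·j^n + n·∑_{j=0}^{d-1} χ(j)·λ^j·j^{n-1}`
(with `0^0 = 1` and `0·j^{-1} = 0`), which encodes the generating function
`∑_{j=0}^{d-1} χ(j)·λ^j·e^{jt}·(log λ + t)/(λ^d e^{dt} - 1) = ∑_{n≥0} B_{n,χ}(λ)·t^n/n!`. -/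
noncomputable def genLambdaBernoulli {d : ℕ} (χ : DirichletCharacter ℂ d) (lam : ℝ) : ℕ → ℂ
  | n =>
    (((Real.log lam : ℂ) * ∑ j ∈ Finset.range d, χ (j : ZMod d) * (lam : ℂ) ^ j * (j : ℂ) ^ n +
          (n : ℂ) * ∑ j ∈ Finset.range d, χ (j : ZMod d) * (lam : ℂ) ^ j * (j : ℂ) ^ (n - 1)) -
        (lam : ℂ) ^ d *
          ∑ k : Fin n, (n.choose (k : ℕ) : ℂ) * (d : ℂ) ^ (n - (k : ℕ)) *
            genLambdaBernoulli χ lam k) /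
      ((lam : ℂ) ^ d - 1)

/-- The Dirichlet-type λ-L-function, for real `0 < λ < 1` and a Dirichlet character `χ` mod `d`:
`L_λ(s, χ) = ∑_{m≥1} χ(m)·λ^m·m^{-s} - (log λ/(s - 1))·∑_{m≥1} χ(m)·λ^m·m^{1-s}`,
complex powers of the positive integer `m` being taken via the real logarithm. -/
noncomputable def lambdaLFunction {d : ℕ} (χ : DirichletCharacter ℂ d) (lam : ℝ) (s : ℂ) : ℂ :=
  (∑' m : ℕ, χ ((m + 1 : ℕ) : ZMod d) * (lam : ℂ) ^ (m + 1) * ((m + 1 : ℕ) : ℂ) ^ (-s)) -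
    ((Real.log lam : ℂ) / (s - 1)) *
      ∑' m : ℕ, χ ((m + 1 : ℕ) : ZMod d) * (lam : ℂ) ^ (m + 1) * ((m + 1 : ℕ) : ℂ) ^ (1 - s)

open Finset

/-- In exponential generating-function terms: multiplication by `t` commutes with
multiplication by `e^{ct}`. -/
theorem sum_range_choose_mul_pow_mul_natCast_mul {R : Type*} [CommSemiring R] (c : R)
    (a : ℕ → R) (n : ℕ) :
    ∑ k ∈ range (n + 1), (n.choose k : R) * c ^ (n - k) * ((k : R) * a (k - 1)) =
      n * ∑ k ∈ range n, ((n - 1).choose k : R) * c ^ (n - 1 - k) * a k := by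
  cases n with
  | zero => simp
  | succ p =>
    rw [sum_range_succ', mul_sum]
    simp only [Nat.cast_zero, zero_mul, mul_zero, add_zero, Nat.add_sub_cancel]
    refine sum_congr rfl fun k _ => ?_
    have hchoose : (((p + 1).choose (k + 1) * (k + 1) : ℕ) : R) = ((p + 1) * p.choose k : ℕ) :=
      congrArg Nat.cast (Nat.add_one_mul_choose_eq p k).symm
    push_cast at hchoose ⊢
    calc ((p + 1).choose (k + 1) : R) * c ^ (p - k) * ((k + 1) * a k)
        = ((p + 1).choose (k + 1) * (k + 1)) * (c ^ (p - k) * a k) := by ring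
      _ = (p + 1) * (p.choose k * c ^ (p - k) * a k) := by rw [hchoose]; ring

section TwistedPowerSum

variable {d : ℕ} (χ : DirichletCharacter ℂ d) (z : ℂ)

noncomputable def twistedPowerTerm (n m : ℕ) : ℂ :=
  χ (m : ZMod d) * z ^ m * (m : ℂ) ^ n

/-- `∑_{m ≥ 1} χ(m)·z^m·m^n`, i.e. the series `∑_{m ≥ 1} χ(m)·z^m·m^{-s}` at `s = -n`. -/
noncomputable def twistedPowerSum (n : ℕ) : ℂ :=
  ∑' m : ℕ, twistedPowerTerm χ z n (m + 1)

variable {χ z}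

theorem twistedPowerTerm_zero_right (hd : d ≠ 1) (n : ℕ) : twistedPowerTerm χ z n 0 = 0 := by
  have : Nontrivial (ZMod d) := ZMod.nontrivial_iff.mpr hd
  simp [twistedPowerTerm, MulChar.map_zero]

theorem twistedPowerTerm_self (hd : d ≠ 1) (n : ℕ) : twistedPowerTerm χ z n d = 0 := by
  have : Nontrivial (ZMod d) := ZMod.nontrivial_iff.mpr hd
  simp [twistedPowerTerm, MulChar.map_zero]

theorem summable_twistedPowerTerm (hz : ‖z‖ < 1) (n : ℕ) :
    Summable (twistedPowerTerm χ z n) := by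
  refine Summable.of_norm_bounded
    (summable_pow_mul_geometric_of_norm_lt_one (r := ‖z‖) n (by simpa using hz)) fun m => ?_
  rw [twistedPowerTerm, norm_mul, norm_mul, norm_pow, norm_pow, Complex.norm_natCast]
  calc ‖χ (m : ZMod d)‖ * ‖z‖ ^ m * (m : ℝ) ^ n ≤ 1 * ‖z‖ ^ m * (m : ℝ) ^ n := by
        gcongr; exact χ.norm_le_one _
    _ = (m : ℝ) ^ n * ‖z‖ ^ m := by ring

/-- The shift `m ↦ m + d`, with `(m + d)^n` expanded binomially; the terms `m = 0` and `m = d`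
vanish because `χ 0 = χ d = 0`. -/
theorem pow_mul_sum_choose_mul_twistedPowerSum (hd : d ≠ 1) (hz : ‖z‖ < 1) (n : ℕ) :
    z ^ d * ∑ k ∈ range (n + 1), (n.choose k : ℂ) * (d : ℂ) ^ (n - k) * twistedPowerSum χ z k =
      twistedPowerSum χ z n - ∑ j ∈ range d, twistedPowerTerm χ z n j := by
  have hsummable (k : ℕ) : Summable fun m => twistedPowerTerm χ z k (m + 1) :=
    (summable_nat_add_iff 1).mpr (summable_twistedPowerTerm hz k)
  have hshift (m : ℕ) : z ^ d * ∑ k ∈ range (n + 1),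
      (n.choose k : ℂ) * (d : ℂ) ^ (n - k) * twistedPowerTerm χ z k (m + 1) =
        twistedPowerTerm χ z n (m + d + 1) := by
    rw [show m + d + 1 = m + 1 + d by ring]
    have hperiodic : ((m + 1 + d : ℕ) : ZMod d) = ((m + 1 : ℕ) : ZMod d) := by simp
    simp only [twistedPowerTerm, hperiodic, Nat.cast_add (m + 1) d, add_pow, mul_sum]
    refine sum_congr rfl fun k _ => ?_
    ring
  have htail := (hsummable n).sum_add_tsum_nat_add d
  have hends : ∑ i ∈ range d, twistedPowerTerm χ z n (i + 1) =
      ∑ j ∈ range d, twistedPowerTerm χ z n j := by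
    have h := (sum_range_succ' (twistedPowerTerm χ z n) d).symm.trans
      (sum_range_succ (twistedPowerTerm χ z n) d)
    rwa [twistedPowerTerm_zero_right hd, twistedPowerTerm_self hd, add_zero, add_zero] at h
  simp only [twistedPowerSum, ← tsum_mul_left, ← Summable.tsum_finsetSum fun k _ =>
    (hsummable k).mul_left _, hshift]
  rw [← hends, ← htail]
  ring

theorem pow_mul_sum_choose_mul_natCast_mul_twistedPowerSum (hd : d ≠ 1) (hz : ‖z‖ < 1)
    (n : ℕ) :
    z ^ d * ∑ k ∈ range (n + 1),
        (n.choose k : ℂ) * (d : ℂ) ^ (n - k) * ((k : ℂ) * twistedPowerSum χ z (k - 1)) =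
      n * (twistedPowerSum χ z (n - 1) - ∑ j ∈ range d, twistedPowerTerm χ z (n - 1) j) := by
  rw [sum_range_choose_mul_pow_mul_natCast_mul]
  cases n with
  | zero => simp
  | succ p => rw [Nat.add_sub_cancel, ← pow_mul_sum_choose_mul_twistedPowerSum hd hz]; ring

end TwistedPowerSum

theorem eq_genLambdaBernoulli_of_recurrence {d : ℕ} (χ : DirichletCharacter ℂ d) {lam : ℝ}
    (hlam : (lam : ℂ) ^ d ≠ 1) {b : ℕ → ℂ}
    (hb : ∀ n, (lam : ℂ) ^ d * ∑ k ∈ range (n + 1), (n.choose k : ℂ) * (d : ℂ) ^ (n - k) * b k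
        - b n = Real.log lam * ∑ j ∈ range d, twistedPowerTerm χ lam n j
          + n * ∑ j ∈ range d, twistedPowerTerm χ lam (n - 1) j) :
    b = genLambdaBernoulli χ lam := by
  funext n
  induction n using Nat.strong_induction_on with
  | _ n ih =>
    have hlower : ∑ k ∈ range n, (n.choose k : ℂ) * (d : ℂ) ^ (n - k) * genLambdaBernoulli χ lam k
        = ∑ k ∈ range n, (n.choose k : ℂ) * (d : ℂ) ^ (n - k) * b k :=
      sum_congr rfl fun k hk => by rw [ih k (mem_range.mp hk)]
    rw [genLambdaBernoulli, eq_div_iff (sub_ne_zero.mpr hlam),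
      ← sum_range fun k => (n.choose k : ℂ) * (d : ℂ) ^ (n - k) * genLambdaBernoulli χ lam k,
      hlower]
    have hrec := hb n
    rw [sum_range_succ, Nat.choose_self, Nat.sub_self] at hrec
    simp only [twistedPowerTerm] at hrec
    push_cast at hrec ⊢
    linear_combination hrec

theorem genLambdaBernoulli_eq_neg_twistedPowerSum {d : ℕ} (hd : 2 ≤ d)
    (χ : DirichletCharacter ℂ d) {lam : ℝ} (h0 : 0 < lam) (h1 : lam < 1) (n : ℕ) :
    genLambdaBernoulli χ lam n = -(Real.log lam * twistedPowerSum χ lam n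
      + n * twistedPowerSum χ lam (n - 1)) := by
  have hz : ‖(lam : ℂ)‖ < 1 := by rwa [Complex.norm_real, Real.norm_of_nonneg h0.le]
  have hlam : (lam : ℂ) ^ d ≠ 1 := by
    exact_mod_cast (pow_lt_one₀ h0.le h1 (by omega)).ne
  refine (congrFun (eq_genLambdaBernoulli_of_recurrence χ hlam (b := fun n =>
    -(Real.log lam * twistedPowerSum χ lam n + n * twistedPowerSum χ lam (n - 1)))
    fun n => ?_) n).symm
  have hpow := pow_mul_sum_choose_mul_twistedPowerSum (χ := χ) (by omega) hz n
  have hderiv := pow_mul_sum_choose_mul_natCast_mul_twistedPowerSum (χ := χ) (by omega) hz n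
  have hsplit : ∑ k ∈ range (n + 1), (n.choose k : ℂ) * (d : ℂ) ^ (n - k) *
      -(Real.log lam * twistedPowerSum χ lam k + k * twistedPowerSum χ lam (k - 1)) =
      -(Real.log lam * ∑ k ∈ range (n + 1), (n.choose k : ℂ) * (d : ℂ) ^ (n - k) *
          twistedPowerSum χ lam k) -
        ∑ k ∈ range (n + 1), (n.choose k : ℂ) * (d : ℂ) ^ (n - k) *
          ((k : ℂ) * twistedPowerSum χ lam (k - 1)) := by
    rw [mul_sum, ← sum_neg_distrib, ← sum_sub_distrib]
    exact sum_congr rfl fun k _ => by ring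
  rw [hsplit]
  linear_combination (-(Real.log lam : ℂ)) * hpow - hderiv

theorem lambdaLFunction_one_sub_natCast {d : ℕ} (χ : DirichletCharacter ℂ d) (lam : ℝ)
    {k : ℕ} (hk : 1 ≤ k) :
    lambdaLFunction χ lam (1 - k) =
      twistedPowerSum χ lam (k - 1) + Real.log lam / k * twistedPowerSum χ lam k := by
  have hneg : -(1 - (k : ℂ)) = ((k - 1 : ℕ) : ℂ) := by push_cast [Nat.cast_sub hk]; ring
  have hone : 1 - (1 - (k : ℂ)) = ((k : ℕ) : ℂ) := by ring
  simp only [lambdaLFunction, twistedPowerSum, twistedPowerTerm, hneg, hone,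
    Complex.cpow_natCast, sub_sub_cancel_left, div_neg, neg_mul, sub_neg_eq_add]

/-- for an integer `d ≥ 2`, a Dirichlet character `χ` mod `d`, real `0 < λ < 1`
and an integer `k ≥ 1`, `L_λ(1 - k, χ) = -B_{k,χ}(λ)/k`: the Dirichlet-type λ-L-function
interpolates the generalized λ-Bernoulli numbers at non-positive integers. -/
theorem lambdaLFunction_interpolation (d : ℕ) (hd : 2 ≤ d) (χ : DirichletCharacter ℂ d)
    (lam : ℝ) (h0 : 0 < lam) (h1 : lam < 1) (k : ℕ) (hk : 1 ≤ k) :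
    lambdaLFunction χ lam (1 - (k : ℂ)) = -genLambdaBernoulli χ lam k / (k : ℂ) := by
  have hk0 : (k : ℂ) ≠ 0 := Nat.cast_ne_zero.mpr (by omega)
  rw [lambdaLFunction_one_sub_natCast χ lam hk,
    genLambdaBernoulli_eq_neg_twistedPowerSum hd χ h0 h1]
  field_simp
  ring
end

section
/- Let λ be a real number with 0 < λ < 1, and let F ≥ 1, 1 ≤ a ≤ F and n ≥ 1 be integers. Then H_λ(1 − n, a|F) = −(F^{n−1}·λ^a/n)·B_n(λ^F; a/F), i.e. the λ-partial zeta function interpolates the λ-Bernoulli polynomials at non-positive integers. -/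
/-- The λ-Bernoulli polynomials `B_n(λ; x) = ∑_{k=0}^{n} C(n,k)·B_k(λ)·x^{n-k}`. -/
noncomputable def lambdaBernoulliPoly (lam : ℂ) (n : ℕ) (x : ℂ) : ℂ :=
  ∑ k ∈ Finset.range (n + 1), (n.choose k : ℂ) * lambdaBernoulli lam k * x ^ (n - k)

/-- The λ-partial zeta function, for real `0 < λ < 1` and integers `F ≥ 1`, `1 ≤ a ≤ F`:
`H_λ(s, a|F) = ∑_{m≥1, m≡a (mod F)} λ^m·m^{-s} - (log λ/(s - 1))·∑_{m≥1, m≡a (mod F)} λ^m·m^{1-s}`,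
complex powers of the positive integer `m` being taken via the real logarithm. -/
noncomputable def lambdaPartialZeta (lam : ℝ) (F a : ℕ) (s : ℂ) : ℂ :=
  (∑' m : {m : ℕ // 0 < m ∧ m % F = a % F}, (lam : ℂ) ^ (m : ℕ) * ((m : ℕ) : ℂ) ^ (-s)) -
    ((Real.log lam : ℂ) / (s - 1)) *
      ∑' m : {m : ℕ // 0 < m ∧ m % F = a % F}, (lam : ℂ) ^ (m : ℕ) * ((m : ℕ) : ℂ) ^ (1 - s)

/-! For `‖q‖ < 1` the λ-Bernoulli numbers have the closed form
`B_n(q) = -Log q · ∑_k q^k k^n - n ∑_k q^k k^(n-1)`: the right-hand side satisfies the defining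
recurrence because `q ∑_k q^k (k+1)^j` is `∑_k q^k k^j` with its `k = 0` term removed. Expanding
`(k + x)^n` binomially turns this into
`B_n(q; x) = -Log q · ∑_k q^k (k+x)^n - n ∑_k q^k (k+x)^(n-1)`. Writing `m = a + F k = F (k + a/F)`,
the two series defining `H_λ(1 - n, a|F)` are exactly these sums for `q = λ^F`, `x = a/F`. -/

open Finset

noncomputable def appell (c : ℕ → ℂ) (n : ℕ) (x : ℂ) : ℂ :=
  ∑ k ∈ range (n + 1), (n.choose k : ℂ) * c k * x ^ (n - k)

theorem lambdaBernoulliPoly_eq_appell (lam : ℂ) :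
    lambdaBernoulliPoly lam = appell (lambdaBernoulli lam) := rfl

theorem appell_sub (c d : ℕ → ℂ) (n : ℕ) (x : ℂ) :
    appell (c - d) n x = appell c n x - appell d n x := by
  simp only [appell, Pi.sub_apply, ← sum_sub_distrib]
  exact sum_congr rfl fun _ _ => by ring

theorem appell_const_mul (α : ℂ) (c : ℕ → ℂ) (n : ℕ) (x : ℂ) :
    appell (fun k => α * c k) n x = α * appell c n x := by
  simp only [appell, mul_sum]
  exact sum_congr rfl fun _ _ => by ring

theorem appell_natCast_mul_pred (c : ℕ → ℂ) (n : ℕ) (x : ℂ) :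
    appell (fun k => k * c (k - 1)) (n + 1) x = (n + 1) * appell c n x := by
  rw [appell, sum_range_succ', appell, mul_sum]
  simp only [Nat.cast_zero, zero_mul, mul_zero, add_zero, Nat.add_sub_cancel,
    Nat.add_sub_add_right]
  refine sum_congr rfl fun k _ => ?_
  have hchoose : ((n + 1).choose (k + 1) : ℂ) * (k + 1) = (n + 1) * n.choose k := by
    exact_mod_cast (Nat.add_one_mul_choose_eq n k).symm
  push_cast
  linear_combination c k * x ^ (n - k) * hchoose

theorem appell_one (c : ℕ → ℂ) (n : ℕ) :
    appell c n 1 = ∑ k ∈ range (n + 1), (n.choose k : ℂ) * c k := by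
  simp [appell]

theorem eq_lambdaBernoulli_of_recurrence {lam : ℂ} (hlam : lam ≠ 1) (β : ℕ → ℂ)
    (hβ0 : β 0 = Complex.log lam / (lam - 1))
    (hβ : ∀ n, 1 ≤ n →
      lam * ∑ k ∈ range (n + 1), (n.choose k : ℂ) * β k - β n = if n = 1 then 1 else 0) :
    β = lambdaBernoulli lam := by
  have hlam' : lam - 1 ≠ 0 := sub_ne_zero.mpr hlam
  funext n
  induction n using Nat.strong_induction_on with
  | _ n ih =>
    match n with
    | 0 => rw [hβ0, lambdaBernoulli]
    | m + 1 =>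
      have hlower : ∑ k : Fin (m + 1), ((m + 1).choose (k : ℕ) : ℂ) * lambdaBernoulli lam k
          = ∑ k ∈ range (m + 1), ((m + 1).choose k : ℂ) * β k := by
        rw [Fin.sum_univ_eq_sum_range (fun k => ((m + 1).choose k : ℂ) * lambdaBernoulli lam k)]
        exact sum_congr rfl fun k hk => by rw [ih k (mem_range.mp hk)]
      have hrec := hβ (m + 1) (by omega)
      rw [sum_range_succ, Nat.choose_self, Nat.cast_one, one_mul] at hrec
      rw [lambdaBernoulli, hlower, eq_div_iff hlam']
      simp only [Nat.add_eq_right] at hrec ⊢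
      linear_combination hrec

noncomputable def geomMoment (q x : ℂ) (j : ℕ) : ℂ :=
  ∑' k : ℕ, q ^ k * ((k : ℂ) + x) ^ j

section geomMoment

variable {q : ℂ}

theorem summable_geom_mul_pow (hq : ‖q‖ < 1) (j : ℕ) : Summable fun k : ℕ => q ^ k * (k : ℂ) ^ j :=
  (summable_pow_mul_geometric_of_norm_lt_one j hq).congr fun _ => mul_comm _ _

theorem geomMoment_eq_appell (hq : ‖q‖ < 1) (x : ℂ) (n : ℕ) :
    geomMoment q x n = appell (geomMoment q 0) n x := by
  have hexpand : ∀ k : ℕ, q ^ k * ((k : ℂ) + x) ^ n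
      = ∑ j ∈ range (n + 1), (n.choose j * x ^ (n - j)) * (q ^ k * (k : ℂ) ^ j) := by
    intro k
    rw [add_pow, mul_sum]
    exact sum_congr rfl fun _ _ => by ring
  rw [geomMoment, tsum_congr hexpand,
    Summable.tsum_finsetSum fun j _ => (summable_geom_mul_pow hq j).mul_left _]
  refine sum_congr rfl fun j _ => ?_
  simp only [tsum_mul_left, geomMoment, add_zero]
  ring

theorem mul_geomMoment_one (hq : ‖q‖ < 1) (j : ℕ) :
    q * geomMoment q 1 j = geomMoment q 0 j - if j = 0 then 1 else 0 := by
  have hshift : ∀ k : ℕ, q * (q ^ k * ((k : ℂ) + 1) ^ j) = q ^ (k + 1) * ((k + 1 : ℕ) : ℂ) ^ j :=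
    fun k => by push_cast; ring
  simp only [geomMoment, add_zero, ← tsum_mul_left, tsum_congr hshift,
    (summable_geom_mul_pow hq j).tsum_eq_zero_add]
  cases j <;> simp

theorem geomMoment_zero_zero (hq : ‖q‖ < 1) : geomMoment q 0 0 = (1 - q)⁻¹ := by
  simpa [geomMoment] using tsum_geometric_of_norm_lt_one hq

end geomMoment

noncomputable def lambdaBernoulliSeries (q : ℂ) (n : ℕ) : ℂ :=
  -Complex.log q * geomMoment q 0 n - n * geomMoment q 0 (n - 1)

section lambdaBernoulliSeries

variable {q : ℂ}

theorem appell_lambdaBernoulliSeries (hq : ‖q‖ < 1) (n : ℕ) (x : ℂ) :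
    appell (lambdaBernoulliSeries q) (n + 1) x
      = -Complex.log q * geomMoment q x (n + 1) - (n + 1) * geomMoment q x n := by
  have hsplit : lambdaBernoulliSeries q
      = (fun k => -Complex.log q * geomMoment q 0 k) - fun k => k * geomMoment q 0 (k - 1) := rfl
  rw [hsplit, appell_sub, appell_const_mul, appell_natCast_mul_pred,
    ← geomMoment_eq_appell hq, ← geomMoment_eq_appell hq]

theorem lambdaBernoulli_eq_lambdaBernoulliSeries (hq : ‖q‖ < 1) :
    lambdaBernoulli q = lambdaBernoulliSeries q := by
  have hq1 : q ≠ 1 := by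
    rintro rfl
    simp at hq
  refine (eq_lambdaBernoulli_of_recurrence hq1 _ ?_ ?_).symm
  · have h1q : 1 - q ≠ 0 := sub_ne_zero.mpr hq1.symm
    rw [lambdaBernoulliSeries, geomMoment_zero_zero hq, ← neg_div_neg_eq, neg_sub]
    field_simp
    ring
  · rintro n hn
    obtain ⟨m, rfl⟩ : ∃ m, n = m + 1 := ⟨n - 1, by omega⟩
    rw [← appell_one, appell_lambdaBernoulliSeries hq]
    have hnext := mul_geomMoment_one hq (m + 1)
    have hcur := mul_geomMoment_one hq m
    simp only [lambdaBernoulliSeries, Nat.add_sub_cancel, Nat.add_eq_right, Nat.cast_add,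
      Nat.cast_one, Nat.add_one_ne_zero, if_false] at hnext ⊢
    rcases m with _ | m
    · simp only [if_true, Nat.cast_zero] at hcur ⊢
      linear_combination -Complex.log q * hnext - hcur
    · simp only [Nat.add_one_ne_zero, if_false] at hcur ⊢
      linear_combination -Complex.log q * hnext - ((m + 1 : ℕ) + 1 : ℂ) * hcur

theorem lambdaBernoulliPoly_succ (hq : ‖q‖ < 1) (n : ℕ) (x : ℂ) :
    lambdaBernoulliPoly q (n + 1) x
      = -Complex.log q * geomMoment q x (n + 1) - (n + 1) * geomMoment q x n := by
  rw [lambdaBernoulliPoly_eq_appell, lambdaBernoulli_eq_lambdaBernoulliSeries hq,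
    appell_lambdaBernoulliSeries hq]

end lambdaBernoulliSeries

section residueClass

variable {F a : ℕ}

theorem le_of_pos_of_mod_eq (ha : a ≤ F) {m : ℕ} (hm : 0 < m) (hmod : m % F = a % F) : a ≤ m := by
  rcases ha.eq_or_lt with rfl | hlt
  · rw [Nat.mod_self] at hmod
    exact Nat.le_of_dvd hm (Nat.dvd_of_mod_eq_zero hmod)
  · rw [Nat.mod_eq_of_lt hlt] at hmod
    exact hmod ▸ Nat.mod_le m F

def residueClassEquiv (ha1 : 1 ≤ a) (ha2 : a ≤ F) : ℕ ≃ {m : ℕ // 0 < m ∧ m % F = a % F} where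
  toFun k := ⟨a + F * k, by omega, Nat.add_mul_mod_self_left a F k⟩
  invFun m := (m - a) / F
  left_inv k := by
    simp only [Nat.add_sub_cancel_left]
    exact Nat.mul_div_cancel_left k (by omega)
  right_inv := by
    rintro ⟨m, hm, hmod⟩
    have ham := le_of_pos_of_mod_eq ha2 hm hmod
    have hdvd : F ∣ m - a := (Nat.modEq_iff_dvd' ham).mp hmod.symm
    ext
    simp only [Nat.mul_div_cancel' hdvd]
    omega

theorem tsum_pow_mul_pow_residueClass (ha1 : 1 ≤ a) (ha2 : a ≤ F) (lam : ℂ) (j : ℕ) :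
    ∑' m : {m : ℕ // 0 < m ∧ m % F = a % F}, lam ^ (m : ℕ) * ((m : ℕ) : ℂ) ^ j
      = lam ^ a * F ^ j * geomMoment (lam ^ F) (a / F) j := by
  have hF : (F : ℂ) ≠ 0 := by exact_mod_cast (show F ≠ 0 by omega)
  rw [← (residueClassEquiv ha1 ha2).tsum_eq, geomMoment, ← tsum_mul_left]
  refine tsum_congr fun k => ?_
  have hcast : ((a + F * k : ℕ) : ℂ) = F * (k + a / F) := by
    push_cast
    field_simp
    ring
  change lam ^ (a + F * k) * ((a + F * k : ℕ) : ℂ) ^ j = _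
  rw [hcast, pow_add, pow_mul, mul_pow]
  ring

theorem lambdaPartialZeta_one_sub_natCast (ha1 : 1 ≤ a) (ha2 : a ≤ F) (lam : ℝ) (m : ℕ) :
    lambdaPartialZeta lam F a (1 - ((m + 1 : ℕ) : ℂ))
      = (lam : ℂ) ^ a * F ^ m * geomMoment ((lam : ℂ) ^ F) (a / F) m
        + Real.log lam / (m + 1)
          * ((lam : ℂ) ^ a * F ^ (m + 1) * geomMoment ((lam : ℂ) ^ F) (a / F) (m + 1)) := by
  have hexp₁ : -(1 - ((m + 1 : ℕ) : ℂ)) = (m : ℕ) := by push_cast; ring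
  have hexp₂ : 1 - (1 - ((m + 1 : ℕ) : ℂ)) = (m + 1 : ℕ) := by ring
  have hden : 1 - ((m + 1 : ℕ) : ℂ) - 1 = -(m + 1) := by push_cast; ring
  simp only [lambdaPartialZeta, hexp₁, hexp₂, hden, Complex.cpow_natCast,
    tsum_pow_mul_pow_residueClass ha1 ha2, div_neg]
  ring

end residueClass

theorem lambdaPartialZeta_interpolation_general (lam : ℝ) (h0 : 0 < lam) (h1 : lam < 1)
    (F a n : ℕ) (ha1 : 1 ≤ a) (ha2 : a ≤ F) (hn : 1 ≤ n) :
    lambdaPartialZeta lam F a (1 - (n : ℂ)) =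
      -((F : ℂ) ^ (n - 1) * (lam : ℂ) ^ a / (n : ℂ)) *
        lambdaBernoulliPoly ((lam : ℂ) ^ F) n ((a : ℂ) / (F : ℂ)) := by
  obtain ⟨m, rfl⟩ : ∃ m, n = m + 1 := ⟨n - 1, by omega⟩
  have hq : ‖(lam : ℂ) ^ F‖ < 1 := by
    rw [norm_pow, Complex.norm_real, Real.norm_of_nonneg h0.le]
    exact pow_lt_one₀ h0.le h1 (by omega)
  have hlog : Complex.log ((lam : ℂ) ^ F) = F * Real.log lam := by
    rw [← Complex.ofReal_pow, ← Complex.ofReal_log (pow_nonneg h0.le F), Real.log_pow]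
    push_cast
    rfl
  rw [lambdaPartialZeta_one_sub_natCast ha1 ha2, lambdaBernoulliPoly_succ hq, hlog,
    Nat.add_sub_cancel]
  push_cast
  field_simp
  ring

/-- for real `0 < λ < 1` and integers `F ≥ 1`, `1 ≤ a ≤ F`, `n ≥ 1`:
`H_λ(1 - n, a|F) = -(F^{n-1}·λ^a/n)·B_n(λ^F; a/F)`: the λ-partial zeta function interpolates
the λ-Bernoulli polynomials at non-positive integers. -/
theorem lambdaPartialZeta_interpolation (lam : ℝ) (h0 : 0 < lam) (h1 : lam < 1)
    (F a n : ℕ) (hF : 1 ≤ F) (ha1 : 1 ≤ a) (ha2 : a ≤ F) (hn : 1 ≤ n) :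
    lambdaPartialZeta lam F a (1 - (n : ℂ)) =
      -((F : ℂ) ^ (n - 1) * (lam : ℂ) ^ a / (n : ℂ)) *
        lambdaBernoulliPoly ((lam : ℂ) ^ F) n ((a : ℂ) / (F : ℂ)) :=
  lambdaPartialZeta_interpolation_general lam h0 h1 F a n ha1 ha2 hn
end

section
/- Let p be a prime, let d ≥ 1 be an integer, and let f be a polynomial with coefficients in ℚ_p. Then the sequence N ↦ p^{−N}·(∑_{x=0}^{p^N−1} f(x + d) − ∑_{x=0}^{p^N−1} f(x)) converges in ℚ_p to ∑_{j=0}^{d−1} f′(j), where f′ is the formal derivative of f. -/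
/-!
The shifted and unshifted sums differ only in their first and last `d` terms, so the difference
telescopes to `∑_{j<d} (f(j + p^N) - f(j))`. Since `p^N → 0` in `ℚ_p` through nonzero values,
each quotient `(f(j + p^N) - f(j)) / p^N` is a difference quotient converging to `f′(j)`.
-/

open Filter Topology Finset

lemma Finset.sum_range_comp_add_sub_sum_range {M : Type*} [AddCommGroup M] (g : ℕ → M)
    (n d : ℕ) :
    ∑ x ∈ range n, g (x + d) - ∑ x ∈ range n, g x = ∑ j ∈ range d, (g (n + j) - g j) := by
  have hsplit : ∑ x ∈ range n, g x + ∑ j ∈ range d, g (n + j) =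
      ∑ j ∈ range d, g j + ∑ x ∈ range n, g (d + x) := by
    rw [← sum_range_add, ← sum_range_add, add_comm]
  rw [sum_sub_distrib, sub_eq_sub_iff_add_eq_add, add_comm (∑ j ∈ range d, _), hsplit, add_comm]
  simp only [add_comm d]

lemma tendsto_pow_atTop_nhdsNE_zero {K : Type*} [NormedDivisionRing K] {x : K} (h0 : x ≠ 0)
    (h1 : ‖x‖ < 1) : Tendsto (fun n : ℕ => x ^ n) atTop (𝓝[≠] 0) :=
  tendsto_nhdsWithin_iff.mpr
    ⟨tendsto_pow_atTop_nhds_zero_of_norm_lt_one h1, .of_forall fun n => pow_ne_zero n h0⟩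

theorem volkenborn_integral_equation_shift_general (p : ℕ) [Fact p.Prime] (d : ℕ)
    (f : Polynomial ℚ_[p]) :
    Filter.Tendsto
      (fun N : ℕ =>
        ((p : ℚ_[p]) ^ N)⁻¹ *
          ((∑ x ∈ Finset.range (p ^ N), f.eval ((x : ℚ_[p]) + (d : ℚ_[p]))) -
            ∑ x ∈ Finset.range (p ^ N), f.eval (x : ℚ_[p])))
      Filter.atTop (nhds (∑ j ∈ Finset.range d, f.derivative.eval (j : ℚ_[p]))) := by
  have hp : Tendsto (fun N : ℕ => (p : ℚ_[p]) ^ N) atTop (𝓝[≠] 0) :=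
    tendsto_pow_atTop_nhdsNE_zero (Nat.cast_ne_zero.mpr (Fact.out : p.Prime).ne_zero)
      Padic.norm_p_lt_one
  have hslope (j : ℕ) := (f.hasDerivAt (j : ℚ_[p])).tendsto_slope_zero.comp hp
  refine (tendsto_finsetSum (range d) fun j _ => hslope j).congr fun N => ?_
  simp only [Function.comp_apply, smul_eq_mul]
  have hshift := sum_range_comp_add_sub_sum_range (fun x : ℕ => f.eval (x : ℚ_[p])) (p ^ N) d
  push_cast at hshift
  simp only [hshift, add_comm _ ((p : ℚ_[p]) ^ N), mul_sum]

/-- for a prime `p`, an integer `d ≥ 1` and a polynomial `f` over `ℚ_p`, the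
sequence `N ↦ p^{-N}·(∑_{x=0}^{p^N-1} f(x + d) - ∑_{x=0}^{p^N-1} f(x))` converges in `ℚ_p`
to `∑_{j=0}^{d-1} f′(j)`. This is the integral equation
`I_1(f(·+d)) = I_1(f) + ∑_{j=0}^{d-1} f′(j)` of the p-adic invariant (Volkenborn) integral,
for polynomial integrands. -/
theorem volkenborn_integral_equation_shift (p : ℕ) [Fact p.Prime] (d : ℕ) (hd : 1 ≤ d)
    (f : Polynomial ℚ_[p]) :
    Filter.Tendsto
      (fun N : ℕ =>
        ((p : ℚ_[p]) ^ N)⁻¹ *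
          ((∑ x ∈ Finset.range (p ^ N), f.eval ((x : ℚ_[p]) + (d : ℚ_[p]))) -
            ∑ x ∈ Finset.range (p ^ N), f.eval (x : ℚ_[p])))
      Filter.atTop (nhds (∑ j ∈ Finset.range d, f.derivative.eval (j : ℚ_[p]))) :=
  volkenborn_integral_equation_shift_general p d f
end
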